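/- arXiv:1207.2891 — 11 statements merged into one kernel-verified Lean document; each statement's English description precedes it below -/
import Mathlib

section
/- If A is a partially cancellative pointed monoid and p is a prime ideal of A, then the quotient A/p is a cancellative monoid. -/
universe u v

namespace ToricMonoid

/-- An ideal of a pointed commutative monoid (= commutative monoid with absorbing zero). -/
def IsIdeal {A : Type u} [CommMonoidWithZero A] (I : Set A) : Prop :=
  (0 : A) ∈ I ∧ ∀ a x : A, x ∈ I → a * x ∈ I

/-- A prime ideal: a proper ideal whose complement is multiplicatively closed. -/
def IsPrimeIdeal {A : Type u} [CommMonoidWithZero A] (p : Set A) : Prop :=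
  IsIdeal p ∧ (1 : A) ∉ p ∧ ∀ a b : A, a ∉ p → b ∉ p → a * b ∉ p

/-- The radical of an ideal. -/
def mradical {A : Type u} [CommMonoidWithZero A] (I : Set A) : Set A :=
  {a : A | ∃ n : ℕ, 1 ≤ n ∧ a ^ n ∈ I}

/-- The nilradical: elements with some power equal to zero. -/
def mnilradical (A : Type u) [CommMonoidWithZero A] : Set A :=
  {a : A | ∃ n : ℕ, 1 ≤ n ∧ a ^ n = 0}

/-- A pointed monoid is cancellative if `a*c = b*c` with `c ≠ 0` implies `a = b`. -/
def IsCancellative (A : Type u) [CommMonoidWithZero A] : Prop :=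
  ∀ a b c : A, c ≠ 0 → a * c = b * c → a = b

/-- Torsionfree: `aⁿ = bⁿ` for some `n ≥ 1` implies `a = b`. -/
def IsTorsionfree (A : Type u) [CommMonoidWithZero A] : Prop :=
  ∀ (a b : A) (n : ℕ), 1 ≤ n → a ^ n = b ^ n → a = b

/-- Reduced: `xⁿ = yⁿ` for all sufficiently large `n` implies `x = y`. -/
def IsReducedMonoid (A : Type u) [CommMonoidWithZero A] : Prop :=
  ∀ x y : A, (∃ N : ℕ, ∀ n ≥ N, x ^ n = y ^ n) → x = y

/-- Seminormal: reduced, and `x³ = y²` implies `x = z², y = z³` for some `z`. -/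
def IsSeminormal (A : Type u) [CommMonoidWithZero A] : Prop :=
  IsReducedMonoid A ∧ ∀ x y : A, x ^ 3 = y ^ 2 → ∃ z : A, x = z ^ 2 ∧ y = z ^ 3

/-- Normal (for a cancellative monoid, phrased internally): whenever a fraction `a/b`
(with `b ≠ 0`) of the pointed group completion satisfies `(a/b)ⁿ = c ∈ A` (i.e.
`aⁿ = bⁿ * c`) for some `n ≥ 1` and `c ≠ 0`, the fraction already lies in `A`
(i.e. `a = b * x` for some `x`). -/
def IsNormalMonoid (A : Type u) [CommMonoidWithZero A] : Prop :=
  ∀ a b c : A, b ≠ 0 → c ≠ 0 → (∃ n : ℕ, 1 ≤ n ∧ a ^ n = b ^ n * c) →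
    ∃ x : A, a = b * x

/-- A morphism of pointed monoids. -/
def IsMonoidHom {A : Type u} {B : Type v} [CommMonoidWithZero A] [CommMonoidWithZero B]
    (f : A → B) : Prop :=
  f 0 = 0 ∧ f 1 = 1 ∧ ∀ a b : A, f (a * b) = f a * f b

/-- `f : A → B` presents `B` as the quotient monoid `A/I` collapsing the ideal `I` to `0`. -/
def IsQuotientMap {A : Type u} {B : Type v} [CommMonoidWithZero A] [CommMonoidWithZero B]
    (I : Set A) (f : A → B) : Prop :=
  IsMonoidHom f ∧ Function.Surjective f ∧ (∀ x : A, f x = 0 ↔ x ∈ I) ∧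
    ∀ a b : A, f a = f b ↔ (a = b ∨ (a ∈ I ∧ b ∈ I))

/-- Partially cancellative: isomorphic to `C/I` with `C` cancellative and `I` an ideal. -/
def IsPC (A : Type u) [CommMonoidWithZero A] : Prop :=
  ∃ (C : Type u) (iC : CommMonoidWithZero C) (I : Set C) (f : C → A),
    @IsCancellative C iC ∧ @IsIdeal C iC I ∧ @IsQuotientMap C A iC inferInstance I f

/-- Partially cancellative torsionfree: isomorphic to `C/I` with `C` cancellative and
torsionfree and `I` an ideal. -/
def IsPCTF (A : Type u) [CommMonoidWithZero A] : Prop :=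
  ∃ (C : Type u) (iC : CommMonoidWithZero C) (I : Set C) (f : C → A),
    @IsCancellative C iC ∧ @IsTorsionfree C iC ∧ @IsIdeal C iC I ∧
      @IsQuotientMap C A iC inferInstance I f

/-- A multiplicatively closed subset. -/
def MulClosed {A : Type u} [CommMonoidWithZero A] (S : Set A) : Prop :=
  (1 : A) ∈ S ∧ ∀ a b : A, a ∈ S → b ∈ S → a * b ∈ S

/-- `f : A → B` presents `B` as the localization `S⁻¹A`. -/
def IsLocalizationMap {A : Type u} {B : Type v} [CommMonoidWithZero A] [CommMonoidWithZero B]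
    (S : Set A) (f : A → B) : Prop :=
  IsMonoidHom f ∧ (∀ s ∈ S, IsUnit (f s)) ∧
    (∀ b : B, ∃ a : A, ∃ s ∈ S, b * f s = f a) ∧
    (∀ a a' : A, f a = f a' ↔ ∃ u ∈ S, a * u = a' * u)

/-- `i : A → B` is a seminormalization of `A`: `B` is seminormal, the induced map
`A_red → B` is injective (`i a = i a'` iff `aⁿ = a'ⁿ` for all `n ≫ 0`), and every
`b ∈ B` has `bⁿ` in the image of `A` for all `n ≫ 0`. -/
def IsSeminormalization {A : Type u} {B : Type v} [CommMonoidWithZero A] [CommMonoidWithZero B]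
    (i : A → B) : Prop :=
  IsMonoidHom i ∧ IsSeminormal B ∧
    (∀ a a' : A, i a = i a' ↔ ∃ N : ℕ, ∀ n ≥ N, a ^ n = a' ^ n) ∧
    ∀ b : B, ∃ N : ℕ, ∀ n ≥ N, ∃ a : A, b ^ n = i a

/-- `j : A → G` presents the pointed group `G` as the pointed group completion `A⁺` of a
cancellative pointed monoid `A`. -/
def IsGroupCompletion {A : Type u} {G : Type v} [CommMonoidWithZero A] [CommGroupWithZero G]
    (j : A → G) : Prop :=
  IsMonoidHom j ∧ Function.Injective j ∧
    ∀ g : G, g ≠ 0 → ∃ a b : A, a ≠ 0 ∧ b ≠ 0 ∧ g = j a / j b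

/-- Inside a group completion `j : A → G`: the seminormalization
`A_sn = {g | gⁿ ∈ A for all n ≫ 0}`. -/
def snSet {A : Type u} {G : Type v} [CommMonoidWithZero A] [CommGroupWithZero G]
    (j : A → G) : Set G :=
  {g : G | ∃ N : ℕ, ∀ n ≥ N, g ^ n ∈ Set.range j}

/-- Inside a group completion `j : A → G`: the normalization
`A_nor = {g | gⁿ ∈ A for some n ≥ 1}`. -/
def norSet {A : Type u} {G : Type v} [CommMonoidWithZero A] [CommGroupWithZero G]
    (j : A → G) : Set G :=
  {g : G | ∃ n : ℕ, 1 ≤ n ∧ g ^ n ∈ Set.range j}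

/-- The conductor ideal of `A ⊆ A_nor` (inside the group completion `G`). -/
def condSet {A : Type u} {G : Type v} [CommMonoidWithZero A] [CommGroupWithZero G]
    (j : A → G) : Set G :=
  {g : G | g ∈ Set.range j ∧ ∀ h ∈ norSet j, h * g ∈ Set.range j}

/-- The prime spectrum of a pointed monoid. -/
def MSpec (A : Type u) [CommMonoidWithZero A] : Type u := {p : Set A // IsPrimeIdeal p}

/-- The Zariski topology on `MSpec A`: closed sets are `V(I) = {p | I ⊆ p}`. -/
instance {A : Type u} [CommMonoidWithZero A] : TopologicalSpace (MSpec A) :=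
  TopologicalSpace.generateFrom
    {U : Set (MSpec A) | ∃ I : Set A, IsIdeal I ∧ U = {p : MSpec A | ¬ I ⊆ p.1}}

/-- The product `c n * c (n+1) * ⋯ * c (k-1)` of dilation exponents from stage `n`
to stage `k`. -/
def transPow (c : ℕ → ℕ) (n k : ℕ) : ℕ := (Finset.Ico n k).prod c

/-- `ℓ : ℕ → A → L` presents `L` as the colimit `A^𝔠` of `A →^{θ_{c₀}} A →^{θ_{c₁}} ⋯`,
where `θ_c a = a^c` is dilation. -/
def IsDilatedColimit {A : Type u} {L : Type v} [CommMonoidWithZero A] [CommMonoidWithZero L]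
    (c : ℕ → ℕ) (ℓ : ℕ → A → L) : Prop :=
  (∀ n : ℕ, IsMonoidHom (ℓ n)) ∧
  (∀ (n : ℕ) (a : A), ℓ (n + 1) (a ^ c n) = ℓ n a) ∧
  (∀ x : L, ∃ (n : ℕ) (a : A), ℓ n a = x) ∧
  ∀ (n m : ℕ) (a b : A), ℓ n a = ℓ m b ↔
    ∃ k : ℕ, n ≤ k ∧ m ≤ k ∧ a ^ transPow c n k = b ^ transPow c m k

/-- If `A` is partially cancellative and `p` is a prime ideal of `A`, then
the quotient `A/p` is cancellative. -/
theorem isCancellative_quotient_prime {A : Type u} {B : Type v}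
    [CommMonoidWithZero A] [CommMonoidWithZero B]
    (hA : IsPC A) (p : Set A) (hp : IsPrimeIdeal p)
    (f : A → B) (hf : IsQuotientMap p f) :
    IsCancellative B := by
  obtain ⟨C, iC, I, g, hCanc, hIdl, hghom, hgsurj, hgzero, hgeq⟩ := hA
  obtain ⟨⟨hp0, _⟩, _, hpmul⟩ := hp
  obtain ⟨hfhom, hfsurj, hfzero, hfeq⟩ := hf
  intro a b c hc habc
  obtain ⟨a', rfl⟩ := hfsurj a
  obtain ⟨b', rfl⟩ := hfsurj b
  obtain ⟨c', rfl⟩ := hfsurj c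
  have hc' : c' ∉ p := fun h => hc ((hfzero c').mpr h)
  have hmul' : f (a' * c') = f (b' * c') := by
    rw [hfhom.2.2, hfhom.2.2]; exact habc
  by_cases hac : a' * c' ∈ p
  · -- both products in p, so a' ∈ p and b' ∈ p, hence both sides are 0
    have hbc : b' * c' ∈ p := by
      rcases (hfeq _ _).mp hmul' with h | ⟨_, h⟩
      · rwa [← h]
      · exact h
    have ha' : a' ∈ p := by
      by_contra h; exact hpmul a' c' h hc' hac
    have hb' : b' ∈ p := by
      by_contra h; exact hpmul b' c' h hc' hbc
    rw [(hfzero a').mpr ha', (hfzero b').mpr hb']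
  · have heq : a' * c' = b' * c' := by
      rcases (hfeq _ _).mp hmul' with h | ⟨h, _⟩
      · exact h
      · exact absurd h hac
    obtain ⟨x, rfl⟩ := hgsurj a'
    obtain ⟨y, rfl⟩ := hgsurj b'
    obtain ⟨z, rfl⟩ := hgsurj c'
    have hgeq' : g (x * z) = g (y * z) := by
      rw [hghom.2.2, hghom.2.2]; exact heq
    rcases (hgeq _ _).mp hgeq' with h | ⟨h, _⟩
    · have hz : z ≠ 0 := by
        rintro rfl
        exact hc (by rw [hghom.1, hfhom.1])
      have hxy : x = y := hCanc x y z hz h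
      rw [hxy]
    · exact absurd (by rw [← hghom.2.2, (hgzero _).mpr h]; exact hp0) hac

end ToricMonoid
end

section
/- If A is a partially cancellative torsionfree pointed monoid (A ≅ C/I with C cancellative and torsionfree) and p is a prime ideal of A, then A/p is torsionfree: aⁿ = bⁿ in A/p for some n ≥ 1 implies a = b. -/
universe u v

namespace ToricMonoid

/-- If `A` is partially cancellative torsionfree and `p` is a prime ideal of
`A`, then `A/p` is torsionfree. -/
theorem isTorsionfree_quotient_prime {A : Type u} {B : Type v}
    [CommMonoidWithZero A] [CommMonoidWithZero B]
    (hA : IsPCTF A) (p : Set A) (hp : IsPrimeIdeal p)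
    (f : A → B) (hf : IsQuotientMap p f) :
    IsTorsionfree B := by
  obtain ⟨hfhom, hfsurj, hfzero, hfeq⟩ := hf
  obtain ⟨hf0, hf1, hfmul⟩ := hfhom
  obtain ⟨⟨hp0, hpmul⟩, hp1, hpprime⟩ := hp
  -- powers commute with f
  have hfpow : ∀ (a : A) (n : ℕ), f (a ^ n) = f a ^ n := by
    intro a n
    induction n with
    | zero => simpa using hf1
    | succ k ih => rw [pow_succ, pow_succ, hfmul, ih]
  -- nonzero elements of B multiply to nonzero
  have hnzd : ∀ u v : B, u ≠ 0 → v ≠ 0 → u * v ≠ 0 := by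
    intro u v hu hv
    obtain ⟨a, rfl⟩ := hfsurj u
    obtain ⟨b, rfl⟩ := hfsurj v
    have ha : a ∉ p := fun h => hu ((hfzero a).2 h)
    have hb : b ∉ p := fun h => hv ((hfzero b).2 h)
    rw [← hfmul]
    exact fun h => hpprime a b ha hb ((hfzero _).1 h)
  have hone : (1 : B) ≠ 0 := by
    rw [← hf1]
    exact fun h => hp1 ((hfzero 1).1 h)
  have hpownz : ∀ (x : B) (n : ℕ), x ≠ 0 → x ^ n ≠ 0 := by
    intro x n hx
    induction n with
    | zero => simpa using hone
    | succ k ih => rw [pow_succ]; exact hnzd _ _ ih hx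
  intro x y n hn hxy
  obtain ⟨a, rfl⟩ := hfsurj x
  obtain ⟨b, rfl⟩ := hfsurj y
  rw [← hfpow, ← hfpow] at hxy
  rcases (hfeq _ _).1 hxy with hab | ⟨hap, hbp⟩
  · -- aⁿ = bⁿ in A; use PCTF structure
    obtain ⟨C, iC, I, g, hCcan, hCtf, hIideal, hghom, hgsurj, hgzero, hgeq⟩ := hA
    obtain ⟨hg0, hg1, hgmul⟩ := hghom
    have hgpow : ∀ (c : C) (n : ℕ), g (c ^ n) = g c ^ n := by
      intro c n
      induction n with
      | zero => simpa using hg1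
      | succ k ih => rw [pow_succ, pow_succ, hgmul, ih]
    obtain ⟨c, hc⟩ := hgsurj a
    obtain ⟨d, hd⟩ := hgsurj b
    have : g (c ^ n) = g (d ^ n) := by rw [hgpow, hgpow, hc, hd, hab]
    rcases (hgeq _ _).1 this with hcd | ⟨hcI, hdI⟩
    · rw [← hc, ← hd, hCtf c d n hn hcd]
    · -- aⁿ = 0 and bⁿ = 0
      have han : a ^ n = 0 := by rw [← hc, ← hgpow]; exact (hgzero _).2 hcI
      have hbn : b ^ n = 0 := by rw [← hd, ← hgpow]; exact (hgzero _).2 hdI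
      have hx0 : f a = 0 := by
        by_contra h
        exact hpownz (f a) n h (by rw [← hfpow, han, hf0])
      have hy0 : f b = 0 := by
        by_contra h
        exact hpownz (f b) n h (by rw [← hfpow, hbn, hf0])
      rw [hx0, hy0]
  · -- both aⁿ, bⁿ ∈ p, so xⁿ = yⁿ = 0
    have hx0 : f a = 0 := by
      by_contra h
      exact hpownz (f a) n h (by rw [← hfpow]; exact (hfzero _).2 hap)
    have hy0 : f b = 0 := by
      by_contra h
      exact hpownz (f b) n h (by rw [← hfpow]; exact (hfzero _).2 hbp)
    rw [hx0, hy0]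

end ToricMonoid
end

section
/- If A is a cancellative normal pointed monoid and p is a prime ideal of A, then A/p is normal: whenever a, b, c ∈ A/p with b ≠ 0, c ≠ 0 satisfy (a/b)ⁿ = c in the group completion of A/p for some n ≥ 1, the fraction a/b already lies in A/p. -/
universe u v

namespace ToricMonoid

/-- If `A` is a cancellative normal pointed monoid and `p` is a prime ideal
of `A`, then `A/p` is normal: whenever `a, b, c ∈ A/p` with `b ≠ 0`, `c ≠ 0` satisfy
`(a/b)ⁿ = c` in the group completion of `A/p` (i.e. `aⁿ = bⁿ * c`) for some `n ≥ 1`,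
the fraction `a/b` already lies in `A/p` (i.e. `a = b * x` for some `x`). -/
theorem isNormalMonoid_quotient_prime {A : Type u} {B : Type v}
    [CommMonoidWithZero A] [CommMonoidWithZero B]
    (hc : IsCancellative A) (hn : IsNormalMonoid A)
    (p : Set A) (hp : IsPrimeIdeal p)
    (f : A → B) (hf : IsQuotientMap p f) :
    IsNormalMonoid B := by
  obtain ⟨⟨hf0, hf1, hfm⟩, hsurj, hzero, heq⟩ := hf
  have hpow : ∀ (x : A) (n : ℕ), f (x ^ n) = f x ^ n := by
    intro x n
    induction n with
    | zero => simpa using hf1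
    | succ k ih => rw [pow_succ, pow_succ, hfm, ih]
  have hpownotp : ∀ (x : A) (n : ℕ), x ∉ p → x ^ n ∉ p := by
    intro x n hx
    induction n with
    | zero => simpa using hp.2.1
    | succ k ih => rw [pow_succ]; exact hp.2.2 _ _ ih hx
  intro a b c hb hc ⟨n, hn1, habc⟩
  obtain ⟨a', rfl⟩ := hsurj a
  obtain ⟨b', rfl⟩ := hsurj b
  obtain ⟨c', rfl⟩ := hsurj c
  have hb' : b' ∉ p := fun h => hb ((hzero b').2 h)
  have hc' : c' ∉ p := fun h => hc ((hzero c').2 h)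
  have : f (a' ^ n) = f (b' ^ n * c') := by
    rw [hpow, hfm, hpow, habc]
  rcases (heq _ _).1 this with h | ⟨_, h2⟩
  · have hb0 : b' ≠ 0 := fun h => hb' (h ▸ hp.1.1)
    have hc0 : c' ≠ 0 := fun h => hc' (h ▸ hp.1.1)
    obtain ⟨x, hx⟩ := hn a' b' c' hb0 hc0 ⟨n, hn1, h⟩
    exact ⟨f x, by rw [hx, hfm]⟩
  · exact absurd h2 (hp.2.2 _ _ (hpownotp b' n hb') hc')

end ToricMonoid
end

section
/- A partially cancellative pointed monoid A is reduced if and only if its nilradical is zero, i.e., the only element a with aⁿ = 0 for some n ≥ 1 is a = 0. -/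
universe u v

namespace ToricMonoid

/-- A partially cancellative pointed monoid is reduced iff its nilradical is
zero, i.e. the only element with `aⁿ = 0` for some `n ≥ 1` is `a = 0`. -/
theorem isPC_reduced_iff_nilradical_zero {A : Type u} [CommMonoidWithZero A]
    (h : IsPC A) :
    IsReducedMonoid A ↔ ∀ a : A, a ∈ mnilradical A → a = 0 := by
  constructor
  · intro hred a ⟨n, hn, ha⟩
    apply hred
    refine ⟨n, fun m hm => ?_⟩
    have h1 : a ^ m = 0 := by
      have : a ^ m = a ^ (m - n) * a ^ n := by
        rw [← pow_add]; congr 1; omega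
      rw [this, ha, mul_zero]
    rw [h1, zero_pow (by omega)]
  · rintro hnil x y ⟨N, hN⟩
    obtain ⟨C, iC, I, f, hcanc, hI, hf⟩ := h
    obtain ⟨hfhom, hfsurj, hfzero, hfeq⟩ := hf
    have hpow : ∀ (c : C) (n : ℕ), f (c ^ n) = f c ^ n := by
      intro c n
      induction n with
      | zero => simpa using hfhom.2.1
      | succ k ih => rw [pow_succ, pow_succ, hfhom.2.2, ih]
    obtain ⟨a, ha⟩ := hfsurj x
    obtain ⟨b, hb⟩ := hfsurj y
    by_cases hcase : ∃ n : ℕ, 1 ≤ n ∧ a ^ n ∈ I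
    · obtain ⟨n, hn, hnI⟩ := hcase
      have hx0 : x = 0 := by
        apply hnil
        exact ⟨n, hn, by rw [← ha, ← hpow, hfzero]; exact hnI⟩
      have hy0 : y = 0 := by
        apply hnil
        refine ⟨max N 1, le_max_right _ _, ?_⟩
        rw [← hN _ (le_max_left _ _), hx0, zero_pow (by positivity)]
      rw [hx0, hy0]
    · push_neg at hcase
      set m := max N 1 with hm
      have ham : a ^ m ∉ I := hcase m (le_max_right _ _)
      have ham0 : a ^ m ≠ 0 := fun h0 => ham (h0 ▸ hI.1)
      have heq : ∀ n ≥ N, a ^ n = b ^ n := by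
        intro n hn
        have := (hfeq (a ^ n) (b ^ n)).mp (by rw [hpow, hpow, ha, hb]; exact hN n hn)
        rcases this with h | ⟨h1, _⟩
        · exact h
        · by_cases hn1 : 1 ≤ n
          · exact absurd h1 (hcase n hn1)
          · interval_cases n; simpa using h1
      have h1 : a ^ m = b ^ m := heq m (le_max_left _ _)
      have h2 : a ^ (m + 1) = b ^ (m + 1) := heq (m + 1) (le_trans (le_max_left _ _) (Nat.le_succ m))
      have : a * a ^ m = b * a ^ m := by
        calc a * a ^ m = a ^ (m + 1) := by rw [pow_succ, mul_comm]
        _ = b ^ (m + 1) := h2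
        _ = b * b ^ m := by rw [pow_succ, mul_comm]
        _ = b * a ^ m := by rw [h1]
      have hab : a = b := hcanc a b (a ^ m) ham0 this
      rw [← ha, ← hb, hab]

end ToricMonoid
end

section
/- If A is a partially cancellative pointed monoid, then A_red := A modulo the congruence relation (a ∼ b iff aⁿ = bⁿ for all n ≫ 0) is isomorphic to A/nil(A), the quotient of A by its nilradical. -/
universe u v

namespace ToricMonoid

theorem IsMonoidHom.map_pow {A : Type u} {B : Type v} [CommMonoidWithZero A]
    [CommMonoidWithZero B] {f : A → B} (hf : IsMonoidHom f) (a : A) (n : ℕ) :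
    f (a ^ n) = f a ^ n := by
  induction n with
  | zero => simpa using hf.2.1
  | succ k ih => rw [pow_succ, hf.2.2, ih, pow_succ]

/-- If `A` is partially cancellative, then `A_red` (the quotient by the
congruence `a ∼ b` iff `aⁿ = bⁿ` for all `n ≫ 0`) is isomorphic to `A/nil(A)`: any
presentation `f : A → B` of the quotient of `A` by its nilradical identifies `a` and `b`
precisely when `a ∼ b`. -/
theorem isPC_red_eq_quotient_nilradical {A : Type u} {B : Type v}
    [CommMonoidWithZero A] [CommMonoidWithZero B]
    (h : IsPC A) (f : A → B) (hf : IsQuotientMap (mnilradical A) f) :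
    ∀ a b : A, f a = f b ↔ ∃ N : ℕ, ∀ n ≥ N, a ^ n = b ^ n := by
  intro a b
  constructor
  · intro hab
    rcases (hf.2.2.2 a b).mp hab with h | ⟨⟨n1, hn1, ha0⟩, ⟨n2, hn2, hb0⟩⟩
    · exact ⟨0, fun n _ => by rw [h]⟩
    · refine ⟨max n1 n2, fun n hn => ?_⟩
      have h1 : a ^ n = 0 := by
        rw [← Nat.sub_add_cancel (le_trans (le_max_left n1 n2) hn), pow_add, ha0, mul_zero]
      have h2 : b ^ n = 0 := by
        rw [← Nat.sub_add_cancel (le_trans (le_max_right n1 n2) hn), pow_add, hb0, mul_zero]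
      rw [h1, h2]
  · rintro ⟨N, hN⟩
    by_cases hnil : ∃ n : ℕ, 1 ≤ n ∧ a ^ n = 0
    · -- both nilpotent
      obtain ⟨n, hn1, ha0⟩ := hnil
      set m := max n N with hm
      have hmn : n ≤ m := le_max_left _ _
      have ham : a ^ m = 0 := by
        rw [← Nat.sub_add_cancel hmn, pow_add, ha0, mul_zero]
      have hbm : b ^ m = 0 := by rw [← hN m (le_max_right _ _), ham]
      have hfa : f a = 0 := (hf.2.2.1 a).mpr ⟨m, le_trans hn1 hmn, ham⟩
      have hfb : f b = 0 := (hf.2.2.1 b).mpr ⟨m, le_trans hn1 hmn, hbm⟩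
      rw [hfa, hfb]
    · push_neg at hnil
      obtain ⟨C, iC, I, g, hcanc, hI, hg⟩ := h
      obtain ⟨x, hx⟩ := hg.2.1 a
      obtain ⟨y, hy⟩ := hg.2.1 b
      set M := max N 1 with hM
      have hM1 : 1 ≤ M := le_max_right _ _
      have key : ∀ k : ℕ, M ≤ k → x ^ k = y ^ k := by
        intro k hk
        have hgxy : g (x ^ k) = g (y ^ k) := by
          rw [hg.1.map_pow, hg.1.map_pow, hx, hy]
          exact hN k (le_trans (le_max_left _ _) hk)
        rcases (hg.2.2.2 _ _).mp hgxy with h' | ⟨hxI, _⟩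
        · exact h'
        · exfalso
          apply hnil k (le_trans hM1 hk)
          rw [← hx, ← hg.1.map_pow]
          exact (hg.2.2.1 _).mpr hxI
      have hxM : x ^ M ≠ 0 := by
        intro h0
        apply hnil M hM1
        rw [← hx, ← hg.1.map_pow, h0]
        exact (hg.2.2.1 _).mpr hI.1
      have hxy : x = y := by
        apply hcanc x y (x ^ M) hxM
        have h1 : x * x ^ M = y * y ^ M := by
          rw [← pow_succ', ← pow_succ']
          exact key (M + 1) (Nat.le_succ_of_le le_rfl)
        rw [← key M le_rfl] at h1
        exact h1
      rw [← hx, ← hy, hxy]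

end ToricMonoid
end

section
/- If A is a seminormal pointed monoid and S ⊆ A is a multiplicatively closed subset, then the localization S⁻¹A is seminormal. -/
universe u v

namespace ToricMonoid

/-- If `A` is seminormal and `S ⊆ A` is multiplicatively closed, then the
localization `S⁻¹A` is seminormal. -/
theorem isSeminormal_localization {A : Type u} {B : Type v}
    [CommMonoidWithZero A] [CommMonoidWithZero B]
    (hA : IsSeminormal A) (S : Set A) (hS : MulClosed S)
    (f : A → B) (hf : IsLocalizationMap S f) :
    IsSeminormal B := by
  obtain ⟨hAred, hAsn⟩ := hA
  obtain ⟨⟨hf0, hf1, hfmul⟩, hfunit, hfsurj, hfeq⟩ := hf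
  obtain ⟨h1S, hmulS⟩ := hS
  have hfpow : ∀ (a : A) (n : ℕ), f (a ^ n) = f a ^ n := by
    intro a n
    induction n with
    | zero => simpa using hf1
    | succ n ih => rw [pow_succ, pow_succ, hfmul, ih]
  constructor
  · -- reduced
    rintro x y ⟨N, hN⟩
    obtain ⟨a, s, hs, hxs⟩ := hfsurj x
    obtain ⟨b, t, ht, hyt⟩ := hfsurj y
    set N' := N + 1 with hN'def
    have key : ∀ n ≥ N, f ((a * t) ^ n) = f ((b * s) ^ n) := by
      intro n hn
      have h2 : x * (f s * f t) = f (a * t) := by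
        rw [hfmul, ← mul_assoc, hxs]
      have h3 : y * (f s * f t) = f (b * s) := by
        rw [hfmul, mul_comm (f s) (f t), ← mul_assoc, hyt, mul_comm]
      rw [hfpow, hfpow, ← h2, ← h3, mul_pow x (f s * f t) n, mul_pow y (f s * f t) n, hN n hn]
    obtain ⟨u, hu, huEq⟩ := (hfeq _ _).mp (key N' (by omega))
    obtain ⟨v, hv, hvEq⟩ := (hfeq _ _).mp (key (N' + 1) (by omega))
    have main : a * t * (u * v) = b * s * (u * v) := by
      apply hAred
      refine ⟨N' * N', fun m hm => ?_⟩
      have hN'pos : 0 < N' := by omega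
      have h1 : m % N' < N' := Nat.mod_lt _ hN'pos
      have h2 : N' ≤ m / N' := (Nat.le_div_iff_mul_le hN'pos).mpr hm
      have h3 : N' * (m / N') + m % N' = m := Nat.div_add_mod m N'
      obtain ⟨k, hk⟩ : ∃ k, m / N' = k + m % N' :=
        ⟨m / N' - m % N', by omega⟩
      set l := m % N' with hl
      have hrep : N' * k + (N' + 1) * l = m := by
        calc N' * k + (N' + 1) * l = N' * (k + l) + l := by ring
          _ = m := by rw [← hk]; exact h3
      have hkm : k ≤ m := by
        have : m / N' ≤ m := Nat.div_le_self m N'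
        omega
      have hlm : l ≤ m := by
        have : N' ≤ N' * N' := Nat.le_mul_of_pos_left N' hN'pos
        omega
      have expand : ∀ w : A,
          (w * (u * v)) ^ m =
            (w ^ N' * u) ^ k * ((w ^ (N' + 1) * v) ^ l *
              (u ^ (m - k) * v ^ (m - l))) := by
        intro w
        have hm1 : k + (m - k) = m := by omega
        have hm2 : l + (m - l) = m := by omega
        calc (w * (u * v)) ^ m = w ^ m * (u ^ m * v ^ m) := by
              rw [mul_pow, mul_pow]
          _ = (w ^ (N' * k) * w ^ ((N' + 1) * l)) *
                ((u ^ k * u ^ (m - k)) * (v ^ l * v ^ (m - l))) := by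
              rw [← pow_add, hrep, ← pow_add, hm1, ← pow_add, hm2]
          _ = (w ^ N' * u) ^ k * ((w ^ (N' + 1) * v) ^ l *
                (u ^ (m - k) * v ^ (m - l))) := by
              rw [mul_pow, mul_pow, pow_mul, pow_mul]
              simp [mul_assoc, mul_comm, mul_left_comm]
      rw [expand, expand, huEq, hvEq]
    have hfab : f (a * t) = f (b * s) :=
      (hfeq _ _).mpr ⟨u * v, hmulS _ _ hu hv, main⟩
    have hx : x * (f s * f t) = f (a * t) := by
      rw [hfmul, ← mul_assoc, hxs]
    have hy : y * (f s * f t) = f (b * s) := by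
      rw [hfmul, mul_comm (f s) (f t), ← mul_assoc, hyt, mul_comm]
    have hcancel : x * (f s * f t) = y * (f s * f t) := by
      rw [hx, hy, hfab]
    exact ((hfunit s hs).mul (hfunit t ht)).mul_right_cancel hcancel
  · -- seminormal condition
    intro x y hxy
    obtain ⟨a, s, hs, hxs⟩ := hfsurj x
    obtain ⟨b, t, ht, hyt⟩ := hfsurj y
    have hrel : f (a ^ 3 * t ^ 2) = f (b ^ 2 * s ^ 3) := by
      have h1 : f (a ^ 3 * t ^ 2) = (x * f s) ^ 3 * f t ^ 2 := by
        rw [hfmul, hfpow, hfpow, hxs]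
      have h2 : f (b ^ 2 * s ^ 3) = (y * f t) ^ 2 * f s ^ 3 := by
        rw [hfmul, hfpow, hfpow, hyt]
      rw [h1, h2, mul_pow, mul_pow, hxy]
      simp [mul_assoc, mul_comm, mul_left_comm]
    obtain ⟨u, hu, huEq⟩ := (hfeq _ _).mp hrel
    -- huEq : a^3 * t^2 * u = b^2 * s^3 * u
    have h6 : (a * s * t ^ 2 * u ^ 2) ^ 3 =
        (a ^ 3 * t ^ 2 * u) * (s ^ 3 * t ^ 4 * u ^ 5) := by
      simp [pow_succ, mul_assoc, mul_comm, mul_left_comm]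
    have h7 : (b * s ^ 3 * t ^ 2 * u ^ 3) ^ 2 =
        (b ^ 2 * s ^ 3 * u) * (s ^ 3 * t ^ 4 * u ^ 5) := by
      simp [pow_succ, mul_assoc, mul_comm, mul_left_comm]
    have hXY : (a * s * t ^ 2 * u ^ 2) ^ 3 = (b * s ^ 3 * t ^ 2 * u ^ 3) ^ 2 := by
      rw [h6, huEq, ← h7]
    obtain ⟨Z, hZ2, hZ3⟩ := hAsn _ _ hXY
    have hW : s * t * u ∈ S := hmulS _ _ (hmulS _ _ hs ht) hu
    obtain ⟨w, hw⟩ := hfunit _ hW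
    have hxW : x * f (s * t * u) ^ 2 = f (a * s * t ^ 2 * u ^ 2) := by
      have hW2 : (s * t * u) ^ 2 = s * (s * t ^ 2 * u ^ 2) := by
        simp [pow_succ, mul_assoc, mul_comm, mul_left_comm]
      calc x * f (s * t * u) ^ 2 = x * f ((s * t * u) ^ 2) := by rw [hfpow]
        _ = x * (f s * f (s * t ^ 2 * u ^ 2)) := by rw [hW2, hfmul]
        _ = f a * f (s * t ^ 2 * u ^ 2) := by rw [← mul_assoc, hxs]
        _ = f (a * s * t ^ 2 * u ^ 2) := by rw [← hfmul, ← mul_assoc, ← mul_assoc]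
    have hyW : y * f (s * t * u) ^ 3 = f (b * s ^ 3 * t ^ 2 * u ^ 3) := by
      have hW3 : (s * t * u) ^ 3 = t * (s ^ 3 * t ^ 2 * u ^ 3) := by
        simp [pow_succ, mul_assoc, mul_comm, mul_left_comm]
      calc y * f (s * t * u) ^ 3 = y * f ((s * t * u) ^ 3) := by rw [hfpow]
        _ = y * (f t * f (s ^ 3 * t ^ 2 * u ^ 3)) := by rw [hW3, hfmul]
        _ = f b * f (s ^ 3 * t ^ 2 * u ^ 3) := by rw [← mul_assoc, hyt]
        _ = f (b * s ^ 3 * t ^ 2 * u ^ 3) := by rw [← hfmul, ← mul_assoc, ← mul_assoc]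
    refine ⟨f Z * ↑w⁻¹, ?_, ?_⟩
    · calc x = x * (↑w * ↑w⁻¹ : B) ^ 2 := by rw [Units.mul_inv]; simp
        _ = x * (↑w : B) ^ 2 * (↑w⁻¹ : B) ^ 2 := by
            rw [mul_pow, mul_assoc]
        _ = f (a * s * t ^ 2 * u ^ 2) * (↑w⁻¹ : B) ^ 2 := by rw [hw, hxW]
        _ = f (Z ^ 2) * (↑w⁻¹ : B) ^ 2 := by rw [← hZ2]
        _ = (f Z * ↑w⁻¹) ^ 2 := by rw [hfpow, mul_pow]
    · calc y = y * (↑w * ↑w⁻¹ : B) ^ 3 := by rw [Units.mul_inv]; simp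
        _ = y * (↑w : B) ^ 3 * (↑w⁻¹ : B) ^ 3 := by
            rw [mul_pow, mul_assoc]
        _ = f (b * s ^ 3 * t ^ 2 * u ^ 3) * (↑w⁻¹ : B) ^ 3 := by rw [hw, hyW]
        _ = f (Z ^ 3) * (↑w⁻¹ : B) ^ 3 := by rw [← hZ3]
        _ = (f Z * ↑w⁻¹) ^ 3 := by rw [hfpow, mul_pow]

end ToricMonoid
end

section
/- Let A be a partially cancellative seminormal pointed monoid and I an ideal of A. Then A/I is seminormal if and only if I is a radical ideal. -/
universe u v

namespace ToricMonoid

/-- Let `A` be a partially cancellative seminormal pointed monoid and `I`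
an ideal of `A`. Then `A/I` is seminormal iff `I` is a radical ideal. -/
theorem isSeminormal_quotient_iff_radical {A : Type u} {B : Type v}
    [CommMonoidWithZero A] [CommMonoidWithZero B]
    (hpc : IsPC A) (hsn : IsSeminormal A) (I : Set A) (hI : IsIdeal I)
    (f : A → B) (hf : IsQuotientMap I f) :
    IsSeminormal B ↔ ∀ a : A, (∃ n : ℕ, 1 ≤ n ∧ a ^ n ∈ I) → a ∈ I := by
  obtain ⟨⟨hf0, hf1, hfmul⟩, hsurj, hzero, heq⟩ := hf
  have hfpow : ∀ (a : A) (n : ℕ), f (a ^ n) = (f a) ^ n := by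
    intro a n
    induction n with
    | zero => simpa using hf1
    | succ n ih => rw [pow_succ, pow_succ, hfmul, ih]
  have hpowmem : ∀ (a : A) (n : ℕ), 1 ≤ n → a ∈ I → a ^ n ∈ I := by
    intro a n hn ha
    have : a ^ n = a ^ (n - 1) * a := by
      rw [← pow_succ]; congr 1; omega
    rw [this]; exact hI.2 _ _ ha
  constructor
  · rintro ⟨hred, -⟩ a ⟨n, hn, han⟩
    rw [← hzero]
    apply hred (f a) 0
    refine ⟨n + 1, fun m hm => ?_⟩
    rw [zero_pow (by omega : m ≠ 0), ← hfpow]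
    rw [hzero]
    have : a ^ m = a ^ (m - n) * a ^ n := by rw [← pow_add]; congr 1; omega
    rw [this]; exact hI.2 _ _ han
  · intro hrad
    constructor
    · rintro x y ⟨N, hN⟩
      obtain ⟨a, rfl⟩ := hsurj x
      obtain ⟨b, rfl⟩ := hsurj y
      have key : ∀ a' b' : A, a' ∈ I → (∀ n ≥ N, a' ^ n = b' ^ n ∨ (a' ^ n ∈ I ∧ b' ^ n ∈ I)) →
          f a' = f b' := by
        intro a' b' ha' h
        have hb' : b' ∈ I := by
          apply hrad b' ⟨max N 1, le_max_right _ _, ?_⟩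
          rcases h (max N 1) (le_max_left _ _) with h1 | h1
          · rw [← h1]; exact hpowmem _ _ (le_max_right _ _) ha'
          · exact h1.2
        rw [(hzero a').2 ha', (hzero b').2 hb']
      have hpows : ∀ n ≥ N, a ^ n = b ^ n ∨ (a ^ n ∈ I ∧ b ^ n ∈ I) := by
        intro n hn
        have := hN n hn
        rw [← hfpow, ← hfpow] at this
        exact (heq _ _).1 this
      by_cases ha : a ∈ I
      · exact key a b ha hpows
      · by_cases hb : b ∈ I
        · exact (key b a hb (fun n hn => ((hpows n hn).imp Eq.symm And.symm))).symm
        · apply congrArg f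
          apply hsn.1 a b
          refine ⟨max N 1, fun n hn => ?_⟩
          rcases hpows n (le_trans (le_max_left _ _) hn) with h1 | h1
          · exact h1
          · exact absurd (hrad a ⟨n, le_trans (le_max_right _ _) hn, h1.1⟩) ha
    · intro x y hxy
      obtain ⟨a, rfl⟩ := hsurj x
      obtain ⟨b, rfl⟩ := hsurj y
      rw [← hfpow, ← hfpow] at hxy
      rcases (heq _ _).1 hxy with h | ⟨ha, hb⟩
      · obtain ⟨z, hz1, hz2⟩ := hsn.2 a b h
        exact ⟨f z, by rw [hz1, hfpow], by rw [hz2, hfpow]⟩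
      · have ha' : a ∈ I := hrad a ⟨3, by omega, ha⟩
        have hb' : b ∈ I := hrad b ⟨2, by omega, hb⟩
        refine ⟨0, ?_, ?_⟩
        · rw [(hzero a).2 ha', zero_pow (by omega : (2:ℕ) ≠ 0)]
        · rw [(hzero b).2 hb', zero_pow (by omega : (3:ℕ) ≠ 0)]

end ToricMonoid
end

section
/- A seminormalization of a pointed monoid A satisfies the universal property: if i : A → B is a seminormalization and f : A → C is any monoid map with C seminormal, there is a unique monoid map g : B → C with g ∘ i = f. Consequently a seminormalization is unique up to unique isomorphism. -/
universe u v

namespace ToricMonoid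

section AuxUP

private lemma hom_pow' {X : Type*} {Y : Type*} [CommMonoidWithZero X] [CommMonoidWithZero Y]
    {f : X → Y} (hf : IsMonoidHom f) (a : X) (n : ℕ) : f (a ^ n) = (f a) ^ n := by
  induction n with
  | zero => simpa using hf.2.1
  | succ n ih => rw [pow_succ, pow_succ, hf.2.2, ih]

private lemma sq_cube' {C : Type*} [CommMonoidWithZero C] (hred : IsReducedMonoid C)
    {x y : C} (h2 : x ^ 2 = y ^ 2) (h3 : x ^ 3 = y ^ 3) : x = y := by
  apply hred
  refine ⟨2, fun n hn => ?_⟩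
  rcases Nat.even_or_odd n with ⟨k, hk⟩ | ⟨k, hk⟩
  · have hnk : n = 2 * k := by omega
    subst hnk
    rw [pow_mul, pow_mul, h2]
  · have hk1 : 1 ≤ k := by omega
    have hnk : n = 3 + 2 * (k - 1) := by omega
    rw [hnk, pow_add, pow_add, h3, pow_mul, pow_mul, h2]

private lemma root_lemma' {C : Type*} [CommMonoidWithZero C] (hC : IsSeminormal C) :
    ∀ N : ℕ, 1 ≤ N → ∀ s : ℕ → C,
      (∀ a b : ℕ, N ≤ a → N ≤ b → s (a + b) = s a * s b) →
      ∃ c : C, ∀ n, N ≤ n → c ^ n = s n := by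
  have hred := hC.1
  intro N
  induction N using Nat.strong_induction_on with
  | _ N IH =>
    intro hN1 s hs
    rcases eq_or_lt_of_le hN1 with h1 | h2
    · -- N = 1
      subst h1
      refine ⟨s 1, fun n hn => ?_⟩
      induction n with
      | zero => omega
      | succ n ih =>
        rcases Nat.eq_or_lt_of_le hn with h | h
        · have : n = 0 := by omega
          subst this; simp
        · have hn' : 1 ≤ n := by omega
          rw [pow_succ, ih hn', ← hs n 1 hn' le_rfl]
    · -- 2 ≤ N
      have hN2 : 2 ≤ N := h2
      have smul : ∀ k, 1 ≤ k → ∀ m, N ≤ m → s (k * m) = s m ^ k := by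
        intro k hk
        induction k with
        | zero => exact absurd hk (by omega)
        | succ k ih =>
          intro m hm
          rcases Nat.eq_or_lt_of_le hk with h | h
          · have : k = 0 := by omega
            subst this; simp
          · have hk' : 1 ≤ k := by omega
            have hkm : N ≤ k * m := le_trans hm (Nat.le_mul_of_pos_left m (by omega))
            have he : (k + 1) * m = k * m + m := by ring
            rw [he, hs (k * m) m hkm hm, ih hk' m hm, pow_succ]
      have spow : ∀ n m, N ≤ n → N ≤ m → s n ^ m = s m ^ n := by
        intro n m hn hm
        rw [← smul m (by omega) n hn, ← smul n (by omega) m hm, Nat.mul_comm]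
      set N' := (N + 1) / 2 with hN'def
      have hzex : ∀ n, N' ≤ n → ∃ z : C, ∀ m, N ≤ m → z ^ m = s m ^ n := by
        intro n hn
        have h2n : N ≤ 2 * n := by omega
        have h3n : N ≤ 3 * n := by omega
        have hx : s (2 * n) ^ 3 = s (3 * n) ^ 2 := by
          rw [← smul 3 (by omega) (2 * n) h2n, ← smul 2 (by omega) (3 * n) h3n]
          congr 1
          ring
        obtain ⟨z, hz2, hz3⟩ := hC.2 (s (2 * n)) (s (3 * n)) hx
        refine ⟨z, fun m hm => ?_⟩
        refine sq_cube' hred ?_ ?_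
        · calc (z ^ m) ^ 2 = (z ^ 2) ^ m := by rw [← pow_mul, ← pow_mul, Nat.mul_comm]
            _ = s (2 * n) ^ m := by rw [hz2]
            _ = s (m * (2 * n)) := (smul m (by omega) (2 * n) h2n).symm
            _ = s ((2 * n) * m) := by rw [Nat.mul_comm]
            _ = s m ^ (2 * n) := smul (2 * n) (by omega) m hm
            _ = (s m ^ n) ^ 2 := by rw [← pow_mul]; congr 1; ring
        · calc (z ^ m) ^ 3 = (z ^ 3) ^ m := by rw [← pow_mul, ← pow_mul, Nat.mul_comm]
            _ = s (3 * n) ^ m := by rw [hz3]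
            _ = s (m * (3 * n)) := (smul m (by omega) (3 * n) h3n).symm
            _ = s ((3 * n) * m) := by rw [Nat.mul_comm]
            _ = s m ^ (3 * n) := smul (3 * n) (by omega) m hm
            _ = (s m ^ n) ^ 3 := by rw [← pow_mul]; congr 1; ring
      set t : ℕ → C := fun n => if h : N' ≤ n then (hzex n h).choose else 1 with htdef
      have htpow : ∀ n, N' ≤ n → ∀ m, N ≤ m → t n ^ m = s m ^ n := by
        intro n hn m hm
        simp only [htdef]
        rw [dif_pos hn]
        exact (hzex n hn).choose_spec m hm
      have ht_mul : ∀ a b : ℕ, N' ≤ a → N' ≤ b → t (a + b) = t a * t b := by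
        intro a b ha hb
        refine hred _ _ ⟨N, fun m hm => ?_⟩
        rw [mul_pow, htpow a ha m hm, htpow b hb m hm, htpow (a + b) (by omega) m hm,
          ← pow_add]
      have hN'lt : N' < N := by omega
      have hN'1 : 1 ≤ N' := by omega
      obtain ⟨c, hc⟩ := IH N' hN'lt hN'1 t ht_mul
      refine ⟨c, fun n hn => ?_⟩
      have h1 : c ^ n = t n := hc n (by omega)
      have h2 : t n = s n := by
        refine hred _ _ ⟨N, fun m hm => ?_⟩
        rw [htpow n (by omega) m hm, spow n m hn hm]
      rw [h1, h2]

private lemma universal' {A : Type*} {B : Type*} {C : Type*}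
    [CommMonoidWithZero A] [CommMonoidWithZero B] [CommMonoidWithZero C]
    (i : A → B) (hi : IsSeminormalization i)
    (f : A → C) (hf : IsMonoidHom f) (hC : IsSeminormal C) :
    ∃! g : B → C, IsMonoidHom g ∧ ∀ a : A, g (i a) = f a := by
  obtain ⟨hih, hsB, hinj, hpow⟩ := hi
  have hred := hC.1
  have key_f : ∀ a a' : A, i a = i a' → f a = f a' := by
    intro a a' h
    obtain ⟨K, hK⟩ := (hinj a a').1 h
    refine hred _ _ ⟨K, fun n hn => ?_⟩
    rw [← hom_pow' hf, ← hom_pow' hf, hK n hn]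
  have Quniq : ∀ (b : B) (c c' : C),
      (∃ N : ℕ, ∀ n, N ≤ n → ∃ a, b ^ n = i a ∧ c ^ n = f a) →
      (∃ N : ℕ, ∀ n, N ≤ n → ∃ a, b ^ n = i a ∧ c' ^ n = f a) → c = c' := by
    rintro b c c' ⟨N₁, h₁⟩ ⟨N₂, h₂⟩
    refine hred _ _ ⟨max N₁ N₂, fun n hn => ?_⟩
    obtain ⟨a, hba, hca⟩ := h₁ n (le_trans (le_max_left _ _) hn)
    obtain ⟨a', hba', hca'⟩ := h₂ n (le_trans (le_max_right _ _) hn)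
    rw [hca, hca']
    exact key_f a a' (hba.symm.trans hba')
  have Qex : ∀ b : B, ∃ c : C, ∃ N : ℕ, ∀ n, N ≤ n → ∃ a, b ^ n = i a ∧ c ^ n = f a := by
    intro b
    obtain ⟨N, hN⟩ := hpow b
    set aa : ℕ → A := fun n => if h : N ≤ n then (hN n h).choose else 1 with haa
    have haa_spec : ∀ n, N ≤ n → b ^ n = i (aa n) := by
      intro n hn
      simp only [haa]
      rw [dif_pos hn]
      exact (hN n hn).choose_spec
    have hsmul : ∀ m n : ℕ, max N 1 ≤ m → max N 1 ≤ n →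
        f (aa (m + n)) = f (aa m) * f (aa n) := by
      intro m n hm hn
      have hm' : N ≤ m := le_trans (le_max_left _ _) hm
      have hn' : N ≤ n := le_trans (le_max_left _ _) hn
      have hkey : i (aa (m + n)) = i (aa m * aa n) := by
        rw [hih.2.2, ← haa_spec m hm', ← haa_spec n hn', ← haa_spec (m + n) (by omega),
          pow_add]
      rw [key_f _ _ hkey, hf.2.2]
    obtain ⟨c, hc⟩ := root_lemma' hC (max N 1) (le_max_right _ _) (fun n => f (aa n)) hsmul
    exact ⟨c, max N 1, fun n hn =>
      ⟨aa n, haa_spec n (le_trans (le_max_left _ _) hn), hc n hn⟩⟩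
  choose g hg using Qex
  have hgi : ∀ a, g (i a) = f a := by
    intro a
    refine Quniq (i a) _ _ (hg (i a)) ⟨0, fun n _ => ⟨a ^ n, ?_, ?_⟩⟩
    · rw [hom_pow' hih]
    · rw [hom_pow' hf]
  have hg0 : g 0 = 0 := by
    refine Quniq 0 _ _ (hg 0) ⟨1, fun n hn => ⟨0, ?_, ?_⟩⟩
    · rw [hih.1, zero_pow (by omega : n ≠ 0)]
    · rw [hf.1, zero_pow (by omega : n ≠ 0)]
  have hg1 : g 1 = 1 := by
    refine Quniq 1 _ _ (hg 1) ⟨0, fun n _ => ⟨1, ?_, ?_⟩⟩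
    · rw [hih.2.1, one_pow]
    · rw [hf.2.1, one_pow]
  have hgmul : ∀ x y, g (x * y) = g x * g y := by
    intro x y
    obtain ⟨N₁, h₁⟩ := hg x
    obtain ⟨N₂, h₂⟩ := hg y
    refine Quniq (x * y) _ _ (hg (x * y)) ⟨max N₁ N₂, fun n hn => ?_⟩
    obtain ⟨a₁, hb₁, hc₁⟩ := h₁ n (le_trans (le_max_left _ _) hn)
    obtain ⟨a₂, hb₂, hc₂⟩ := h₂ n (le_trans (le_max_right _ _) hn)
    exact ⟨a₁ * a₂, by rw [mul_pow, hb₁, hb₂, hih.2.2],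
      by rw [mul_pow, hc₁, hc₂, hf.2.2]⟩
  refine ⟨g, ⟨⟨hg0, hg1, hgmul⟩, hgi⟩, ?_⟩
  rintro g' ⟨hg'h, hg'i⟩
  funext b
  obtain ⟨N, hN⟩ := hpow b
  refine Quniq b _ _ ⟨N, fun n hn => ?_⟩ (hg b)
  obtain ⟨a, ha⟩ := hN n hn
  exact ⟨a, ha, by rw [← hom_pow' hg'h, ha, hg'i]⟩

private lemma comp_hom' {X : Type*} {Y : Type*} {Z : Type*}
    [CommMonoidWithZero X] [CommMonoidWithZero Y] [CommMonoidWithZero Z]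
    {p : X → Y} {q : Y → Z} (hp : IsMonoidHom p) (hq : IsMonoidHom q) :
    IsMonoidHom (q ∘ p) :=
  ⟨by simp [Function.comp, hp.1, hq.1], by simp [Function.comp, hp.2.1, hq.2.1],
    fun a b => by simp [Function.comp, hp.2.2, hq.2.2]⟩

private lemma id_hom' {X : Type*} [CommMonoidWithZero X] : IsMonoidHom (id : X → X) :=
  ⟨rfl, rfl, fun _ _ => rfl⟩

end AuxUP

/-- Universal property of seminormalization: if `i : A → B` is a
seminormalization and `f : A → C` is a monoid map with `C` seminormal, there is a unique
monoid map `g : B → C` with `g ∘ i = f`.  Consequently, a seminormalization is unique up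
to unique isomorphism: for another seminormalization `i' : A → B'` there is a unique
isomorphism `e : B → B'` with `e ∘ i = i'`. -/
theorem seminormalization_universal_property {A : Type u} {B C B' : Type v}
    [CommMonoidWithZero A] [CommMonoidWithZero B] [CommMonoidWithZero C]
    [CommMonoidWithZero B']
    (i : A → B) (hi : IsSeminormalization i)
    (f : A → C) (hf : IsMonoidHom f) (hC : IsSeminormal C)
    (i' : A → B') (hi' : IsSeminormalization i') :
    (∃! g : B → C, IsMonoidHom g ∧ ∀ a : A, g (i a) = f a) ∧
    (∃! e : B → B', (IsMonoidHom e ∧ Function.Bijective e) ∧ ∀ a : A, e (i a) = i' a) := by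
  constructor
  · exact universal' i hi f hf hC
  · obtain ⟨e, ⟨heh, hei⟩, heu⟩ := universal' i hi i' hi'.1 hi'.2.1
    obtain ⟨e', ⟨he'h, he'i⟩, he'u⟩ := universal' i' hi' i hi.1 hi.2.1
    have hee' : e' ∘ e = id := by
      obtain ⟨gB, _, hgBu⟩ := universal' i hi i hi.1 hi.2.1
      have h1 : e' ∘ e = gB := hgBu _ ⟨comp_hom' heh he'h,
        fun a => by simp only [Function.comp_apply, hei, he'i]⟩
      have h2 : id = gB := hgBu _ ⟨id_hom', fun a => rfl⟩
      rw [h1, h2]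
    have he'e : e ∘ e' = id := by
      obtain ⟨gB', _, hgBu'⟩ := universal' i' hi' i' hi'.1 hi'.2.1
      have h1 : e ∘ e' = gB' := hgBu' _ ⟨comp_hom' he'h heh,
        fun a => by simp only [Function.comp_apply, hei, he'i]⟩
      have h2 : id = gB' := hgBu' _ ⟨id_hom', fun a => rfl⟩
      rw [h1, h2]
    have hbij : Function.Bijective e := by
      have l : Function.LeftInverse e' e := fun b => congrFun hee' b
      have r : Function.RightInverse e' e := fun b => congrFun he'e b
      exact ⟨l.injective, r.surjective⟩
    refine ⟨e, ⟨⟨heh, hbij⟩, hei⟩, ?_⟩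
    rintro e₂ ⟨⟨he₂h, _⟩, he₂i⟩
    exact heu e₂ ⟨he₂h, he₂i⟩

end ToricMonoid
end

section
/- If A is a cancellative pointed monoid with pointed group completion A⁺, then A_sn := {f ∈ A⁺ | fⁿ ∈ A for all n ≫ 0}, with the canonical inclusion A ↪ A_sn, is the seminormalization of A. In particular A ⊆ A_sn ⊆ A_nor. -/
universe u v

namespace ToricMonoid

private lemma jpow_aux {A : Type u} {G : Type v} [CommMonoidWithZero A] [CommGroupWithZero G]
    {j : A → G} (h : IsMonoidHom j) (a : A) (n : ℕ) : j (a ^ n) = j a ^ n := by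
  induction n with
  | zero => simpa using h.2.1
  | succ n ih => rw [pow_succ, pow_succ, h.2.2, ih]

private lemma two_three_aux (r : ℕ) (hr : 2 ≤ r) : ∃ a b : ℕ, r = 2 * a + 3 * b := by
  rcases Nat.even_or_odd r with ⟨k, hk⟩ | ⟨k, hk⟩
  · exact ⟨k, 0, by omega⟩
  · exact ⟨k - 1, 1, by omega⟩

/-- If `A` is a cancellative pointed monoid with pointed group completion
`j : A → A⁺ = G`, then `A_sn = {f ∈ A⁺ | fⁿ ∈ A for all n ≫ 0}`, with the canonical
inclusion of `A`, is the seminormalization of `A`: it contains the image of `A`, is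
contained in the normalization, is a pointed submonoid of `G`, is seminormal (reduced and
satisfying the `x³ = y²` condition), and every element has all large powers in `A`
(the last being definitional).  In particular `A ⊆ A_sn ⊆ A_nor`. -/
theorem snSet_is_seminormalization {A : Type u} {G : Type v}
    [CommMonoidWithZero A] [CommGroupWithZero G]
    (hA : IsCancellative A) (j : A → G) (hj : IsGroupCompletion j) :
    Set.range j ⊆ snSet j ∧ snSet j ⊆ norSet j ∧
    (0 : G) ∈ snSet j ∧ (1 : G) ∈ snSet j ∧
    (∀ x y : G, x ∈ snSet j → y ∈ snSet j → x * y ∈ snSet j) ∧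
    (∀ x y : G, x ∈ snSet j → y ∈ snSet j →
      (∃ N : ℕ, ∀ n ≥ N, x ^ n = y ^ n) → x = y) ∧
    (∀ x y : G, x ∈ snSet j → y ∈ snSet j → x ^ 3 = y ^ 2 →
      ∃ z ∈ snSet j, x = z ^ 2 ∧ y = z ^ 3) := by
  obtain ⟨hhom, hinj, hfrac⟩ := hj
  have hrangemul : ∀ u v : G, u ∈ Set.range j → v ∈ Set.range j → u * v ∈ Set.range j := by
    rintro u v ⟨a, rfl⟩ ⟨b, rfl⟩
    exact ⟨a * b, hhom.2.2 a b⟩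
  have hrangepow : ∀ (u : G) (n : ℕ), u ∈ Set.range j → u ^ n ∈ Set.range j := by
    rintro u n ⟨a, rfl⟩
    exact ⟨a ^ n, jpow_aux hhom a n⟩
  refine ⟨?_, ?_, ?_, ?_, ?_, ?_, ?_⟩
  · rintro g ⟨a, rfl⟩
    exact ⟨0, fun n _ => hrangepow _ n ⟨a, rfl⟩⟩
  · rintro g ⟨N, hN⟩
    exact ⟨N + 1, by omega, hN (N + 1) (by omega)⟩
  · refine ⟨1, fun n hn => ?_⟩
    rw [zero_pow (by omega : n ≠ 0)]
    exact ⟨0, hhom.1⟩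
  · exact ⟨0, fun n _ => ⟨1, by simp [hhom.2.1]⟩⟩
  · rintro x y ⟨N, hN⟩ ⟨M, hM⟩
    refine ⟨max N M, fun n hn => ?_⟩
    rw [mul_pow]
    exact hrangemul _ _ (hN n (le_trans (le_max_left _ _) hn))
      (hM n (le_trans (le_max_right _ _) hn))
  · rintro x y - - ⟨N, hN⟩
    by_cases hx : x = 0
    · subst hx
      have h1 : y ^ (N + 1) = 0 := by
        rw [← hN (N + 1) (by omega)]
        exact zero_pow (by omega)
      exact ((pow_eq_zero_iff (by omega : N + 1 ≠ 0)).mp h1).symm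
    · have h1 : x ^ (N + 1) = y ^ (N + 1) := hN (N + 1) (by omega)
      have h2 : x ^ (N + 2) = y ^ (N + 2) := hN (N + 2) (by omega)
      have hne : x ^ (N + 1) ≠ 0 := pow_ne_zero _ hx
      have key : x * x ^ (N + 1) = y * x ^ (N + 1) := by
        rw [← pow_succ', h2, h1, pow_succ']
      exact mul_right_cancel₀ hne key
  · rintro x y ⟨Nx, hNx⟩ ⟨Ny, hNy⟩ hxy
    by_cases hx : x = 0
    · subst hx
      have hy : y = 0 := by
        have : y ^ 2 = 0 := by rw [← hxy, zero_pow (by omega : (3:ℕ) ≠ 0)]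
        exact pow_eq_zero_iff (by omega : (2:ℕ) ≠ 0) |>.mp this
      exact ⟨0, ⟨1, fun n hn => by
        rw [zero_pow (by omega : n ≠ 0)]; exact ⟨0, hhom.1⟩⟩,
        by rw [zero_pow] <;> omega, by rw [hy, zero_pow] <;> omega⟩
    · have hy : y ≠ 0 := by
        intro h
        apply hx
        have : x ^ 3 = 0 := by rw [hxy, h, zero_pow (by omega : (2:ℕ) ≠ 0)]
        exact pow_eq_zero_iff (by omega : (3:ℕ) ≠ 0) |>.mp this
      have hz2 : (y / x) ^ 2 = x := by
        rw [div_pow, div_eq_iff (pow_ne_zero 2 hx), ← hxy, pow_succ']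
      have hz3 : (y / x) ^ 3 = y := by
        rw [div_pow, hxy, div_eq_iff (pow_ne_zero 2 hy), pow_succ']
      refine ⟨y / x, ?_, hz2.symm, hz3.symm⟩
      set N := max Nx Ny with hNdef
      refine ⟨5 * N + 2, fun n hn => ?_⟩
      obtain ⟨a, b, hab⟩ := two_three_aux (n - 5 * N) (by omega)
      have hn_eq : n = 2 * (N + a) + 3 * (N + b) := by omega
      have : (y / x) ^ n = x ^ (N + a) * y ^ (N + b) := by
        rw [hn_eq, pow_add, pow_mul, pow_mul, hz2, hz3]
      rw [this]
      exact hrangemul _ _ (hNx _ (by omega)) (hNy _ (by omega))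

end ToricMonoid
end

section
/- If A is a pointed monoid whose seminormalization A → A_sn exists, and S ⊆ A is a multiplicatively closed subset, then the induced map S⁻¹A → S⁻¹(A_sn) is the seminormalization of S⁻¹A. -/
universe u v

namespace ToricMonoid

section Aux

variable {M : Type*} [CommMonoidWithZero M]

lemma aux_unit_cancel {x y u v : M} (huv : u * v = 1) (h : x * u = y * u) : x = y := by
  have h2 := congrArg (· * v) h
  simpa [mul_assoc, huv] using h2

lemma aux_mul_ext {a b t t' : M} (h : a * t = b * t) : a * (t * t') = b * (t * t') := by
  rw [← mul_assoc, ← mul_assoc, h]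

lemma aux_pow_mul_add {u v w : M} {p q : ℕ}
    (hp : u ^ p * w = v ^ p * w) (hq : u ^ q * w = v ^ q * w) :
    u ^ (p + q) * w = v ^ (p + q) * w := by
  calc u ^ (p + q) * w = u ^ p * (u ^ q * w) := by rw [pow_add, mul_assoc]
    _ = u ^ p * (v ^ q * w) := by rw [hq]
    _ = v ^ q * (u ^ p * w) := by rw [mul_left_comm]
    _ = v ^ q * (v ^ p * w) := by rw [hp]
    _ = v ^ (p + q) * w := by rw [← mul_assoc, ← pow_add, Nat.add_comm q p]

lemma aux_pow_mul_all {u v w : M} {n : ℕ} (hn : 1 ≤ n)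
    (h1 : u ^ n * w = v ^ n * w) (h2 : u ^ (n + 1) * w = v ^ (n + 1) * w)
    {m : ℕ} (hm : n * n ≤ m) : u ^ m * w = v ^ m * w := by
  have muln : ∀ a : ℕ, u ^ (a * n) * w = v ^ (a * n) * w := by
    intro a; induction a with
    | zero => simp
    | succ a ih => rw [Nat.succ_mul]; exact aux_pow_mul_add ih h1
  have muln1 : ∀ a : ℕ, u ^ (a * (n + 1)) * w = v ^ (a * (n + 1)) * w := by
    intro a; induction a with
    | zero => simp
    | succ a ih => rw [Nat.succ_mul]; exact aux_pow_mul_add ih h2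
  have h3 : n ≤ m / n := (Nat.le_div_iff_mul_le hn).2 hm
  obtain ⟨d, hd⟩ := Nat.le.dest (le_of_lt (lt_of_lt_of_le (Nat.mod_lt m hn) h3))
  have hm' : m = d * n + (m % n) * (n + 1) := by
    calc m = n * (m / n) + m % n := (Nat.div_add_mod m n).symm
      _ = n * (m % n + d) + m % n := by rw [hd]
      _ = d * n + (m % n) * (n + 1) := by ring
  rw [hm']
  exact aux_pow_mul_add (muln d) (muln1 (m % n))

lemma aux_hom_pow {M' N' : Type*} [CommMonoidWithZero M'] [CommMonoidWithZero N']
    {φ : M' → N'} (hφ : IsMonoidHom φ) (a : M') (n : ℕ) : φ (a ^ n) = φ a ^ n := by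
  induction n with
  | zero => simpa using hφ.2.1
  | succ n ih => rw [pow_succ, pow_succ, hφ.2.2, ih]

end Aux

/-- If the seminormalization `i : A → A_sn` exists and `S ⊆ A` is
multiplicatively closed, then the induced map `S⁻¹A → S⁻¹(A_sn)` is the seminormalization
of `S⁻¹A`. -/
theorem seminormalization_localizes {A B A' B' : Type u}
    [CommMonoidWithZero A] [CommMonoidWithZero B]
    [CommMonoidWithZero A'] [CommMonoidWithZero B']
    (i : A → B) (hi : IsSeminormalization i)
    (S : Set A) (hS : MulClosed S)
    (f : A → A') (hf : IsLocalizationMap S f)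
    (g : B → B') (hg : IsLocalizationMap (i '' S) g)
    (h : A' → B') (hh : IsMonoidHom h) (hcomm : ∀ a : A, h (f a) = g (i a)) :
    IsSeminormalization h := by
  obtain ⟨hiH, ⟨hBred, hBsn⟩, hiInj, hiPow⟩ := hi
  obtain ⟨hfH, hfU, hfS, hfE⟩ := hf
  obtain ⟨hgH, hgU, hgS, hgE⟩ := hg
  have fm := hfH.2.2
  have gm := hgH.2.2
  have im := hiH.2.2
  have hm := hh.2.2
  have hgiU : ∀ s ∈ S, ∃ vs : B', g (i s) * vs = 1 := fun s hs =>
    (hgU (i s) ⟨s, hs, rfl⟩).exists_right_inv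
  -- Step A: B' is reduced
  have hred : IsReducedMonoid B' := by
    rintro x y ⟨N, hN⟩
    obtain ⟨b, σ, hσ, hx⟩ := hgS x
    obtain ⟨b', σ', hσ', hy⟩ := hgS y
    have hgu : g (b * σ') = x * (g σ * g σ') := by rw [gm, ← hx, mul_assoc]
    have hgv : g (b' * σ) = y * (g σ * g σ') := by
      rw [gm, ← hy, mul_assoc, mul_comm (g σ') (g σ)]
    have key : ∀ n, N ≤ n → g ((b * σ') ^ n) = g ((b' * σ) ^ n) := fun n hn => by
      rw [aux_hom_pow hgH, aux_hom_pow hgH, hgu, hgv, mul_pow, mul_pow, mul_pow, mul_pow, hN n hn]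
    set n₀ := max N 1 with hn₀def
    have hn₀1 : 1 ≤ n₀ := le_max_right _ _
    obtain ⟨t₁, ⟨τ₁, hτ₁, rfl⟩, ht₁⟩ := (hgE _ _).1 (key n₀ (le_max_left _ _))
    obtain ⟨t₂, ⟨τ₂, hτ₂, rfl⟩, ht₂⟩ :=
      (hgE _ _).1 (key (n₀ + 1) (le_trans (le_max_left _ _) (Nat.le_succ _)))
    have hw1 : (b * σ') ^ n₀ * (i τ₁ * i τ₂) = (b' * σ) ^ n₀ * (i τ₁ * i τ₂) :=
      aux_mul_ext ht₁
    have hw2 : (b * σ') ^ (n₀ + 1) * (i τ₁ * i τ₂) = (b' * σ) ^ (n₀ + 1) * (i τ₁ * i τ₂) := by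
      rw [mul_comm (i τ₁) (i τ₂)]; exact aux_mul_ext ht₂
    have huw : (b * σ') * (i τ₁ * i τ₂) = (b' * σ) * (i τ₁ * i τ₂) := by
      apply hBred
      refine ⟨n₀ * n₀ + 1, fun m hm' => ?_⟩
      have h5 := aux_pow_mul_all hn₀1 hw1 hw2 (m := m) (by omega)
      have hsplit : (i τ₁ * i τ₂) ^ m = (i τ₁ * i τ₂) * (i τ₁ * i τ₂) ^ (m - 1) := by
        conv_lhs => rw [show m = 1 + (m - 1) by omega]
        rw [pow_add, pow_one]
      calc ((b * σ') * (i τ₁ * i τ₂)) ^ m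
          = (b * σ') ^ m * (i τ₁ * i τ₂) ^ m := mul_pow _ _ _
        _ = ((b * σ') ^ m * (i τ₁ * i τ₂)) * (i τ₁ * i τ₂) ^ (m - 1) := by
            rw [hsplit]; ac_rfl
        _ = ((b' * σ) ^ m * (i τ₁ * i τ₂)) * (i τ₁ * i τ₂) ^ (m - 1) := by rw [h5]
        _ = (b' * σ) ^ m * (i τ₁ * i τ₂) ^ m := by rw [hsplit]; ac_rfl
        _ = ((b' * σ) * (i τ₁ * i τ₂)) ^ m := (mul_pow _ _ _).symm
    have hguv : g (b * σ') = g (b' * σ) :=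
      (hgE _ _).2 ⟨i τ₁ * i τ₂, ⟨τ₁ * τ₂, hS.2 _ _ hτ₁ hτ₂, im τ₁ τ₂⟩, huw⟩
    obtain ⟨cσ, hcσ⟩ := (hgU σ hσ).exists_right_inv
    obtain ⟨cσ', hcσ'⟩ := (hgU σ' hσ').exists_right_inv
    have hxy : x * (g σ * g σ') = y * (g σ * g σ') := by rw [← hgu, ← hgv, hguv]
    exact aux_unit_cancel
      (show (g σ * g σ') * (cσ * cσ') = 1 by
        rw [mul_mul_mul_comm, hcσ, hcσ', one_mul]) hxy
  refine ⟨hh, ⟨hred, ?_⟩, ?_, ?_⟩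
  · -- Step B: B' is seminormal
    intro x y hxy3
    obtain ⟨b, σ, ⟨s, hs, rfl⟩, hx⟩ := hgS x
    obtain ⟨b', σ', ⟨s', hs', rfl⟩, hy⟩ := hgS y
    have hs₀ : s * s' ∈ S := hS.2 _ _ hs hs'
    have hx0 : x * g (i (s * s')) = g (b * i s') := by
      rw [im, gm, gm, ← hx, mul_assoc]
    have hy0 : y * g (i (s * s')) = g (b' * i s) := by
      rw [im, gm, gm, ← hy, mul_assoc, mul_comm (g (i s)) (g (i s'))]
    have hx2 : g (b * i s' * i (s * s')) = x * g (i (s * s')) ^ 2 := by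
      rw [gm, ← hx0, sq, mul_assoc]
    have hy3g : g (b' * i s * (i (s * s') * i (s * s'))) = y * g (i (s * s')) ^ 3 := by
      rw [gm, ← hy0, gm, pow_succ, sq]; ac_rfl
    have hrel : g ((b * i s' * i (s * s')) ^ 3) = g ((b' * i s * (i (s * s') * i (s * s'))) ^ 2) := by
      rw [aux_hom_pow hgH, aux_hom_pow hgH, hx2, hy3g, mul_pow, mul_pow,
        ← pow_mul, ← pow_mul, hxy3]
    obtain ⟨t, ⟨τ, hτ, rfl⟩, ht⟩ := (hgE _ _).1 hrel
    have hC : (b * i s' * i (s * s') * i τ ^ 2) ^ 3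
        = (b' * i s * (i (s * s') * i (s * s')) * i τ ^ 3) ^ 2 := by
      have h6 : (b * i s' * i (s * s')) ^ 3 * i τ ^ 6
          = (b' * i s * (i (s * s') * i (s * s'))) ^ 2 * i τ ^ 6 := by
        have h7 := aux_mul_ext (t' := i τ ^ 5) ht
        have h8 : i τ * i τ ^ 5 = i τ ^ 6 := by rw [← pow_succ']
        rwa [h8] at h7
      calc (b * i s' * i (s * s') * i τ ^ 2) ^ 3
          = (b * i s' * i (s * s')) ^ 3 * (i τ ^ 2) ^ 3 := mul_pow _ _ _
        _ = (b * i s' * i (s * s')) ^ 3 * i τ ^ 6 := by rw [← pow_mul]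
        _ = (b' * i s * (i (s * s') * i (s * s'))) ^ 2 * i τ ^ 6 := h6
        _ = (b' * i s * (i (s * s') * i (s * s'))) ^ 2 * (i τ ^ 3) ^ 2 := by rw [← pow_mul]
        _ = (b' * i s * (i (s * s') * i (s * s')) * i τ ^ 3) ^ 2 := (mul_pow _ _ _).symm
    obtain ⟨z, hz2, hz3⟩ := hBsn _ _ hC
    have hgCx : g (b * i s' * i (s * s') * i τ ^ 2) = x * (g (i (s * s')) * g (i τ)) ^ 2 := by
      rw [gm, hx2, aux_hom_pow hgH, mul_pow, mul_assoc]
    have hgCy : g (b' * i s * (i (s * s') * i (s * s')) * i τ ^ 3)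
        = y * (g (i (s * s')) * g (i τ)) ^ 3 := by
      rw [gm, hy3g, aux_hom_pow hgH, mul_pow, mul_assoc]
    obtain ⟨Vw, hVw⟩ := hgiU (s * s' * τ) (hS.2 _ _ hs₀ hτ)
    have hW : (g (i (s * s')) * g (i τ)) * Vw = 1 := by rw [← gm, ← im]; exact hVw
    refine ⟨g z * Vw, ?_, ?_⟩
    · rw [mul_pow, ← aux_hom_pow hgH, ← hz2, hgCx, mul_assoc, ← mul_pow, hW, one_pow, mul_one]
    · rw [mul_pow, ← aux_hom_pow hgH, ← hz3, hgCy, mul_assoc, ← mul_pow, hW, one_pow, mul_one]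
  · -- Step C: injectivity criterion
    intro a' a''
    constructor
    · intro hEq
      obtain ⟨a₁, s₁, hs₁, he₁⟩ := hfS a'
      obtain ⟨a₂, s₂, hs₂, he₂⟩ := hfS a''
      have k1 : h (f (a₁ * s₂)) = h a' * (h (f s₁) * h (f s₂)) := by
        rw [fm, hm, ← he₁, hm, mul_assoc]
      have k2 : h (f (a₂ * s₁)) = h a'' * (h (f s₁) * h (f s₂)) := by
        rw [fm, hm, ← he₂, hm, mul_assoc, mul_comm (h (f s₂)) (h (f s₁))]
      have hb : g (i (a₁ * s₂)) = g (i (a₂ * s₁)) := by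
        rw [← hcomm, ← hcomm, k1, k2, hEq]
      obtain ⟨t', ⟨t, htS, rfl⟩, htEq⟩ := (hgE _ _).1 hb
      have hbt : i (a₁ * s₂ * t) = i (a₂ * s₁ * t) := by
        calc i (a₁ * s₂ * t) = i (a₁ * s₂) * i t := im _ _
          _ = i (a₂ * s₁) * i t := htEq
          _ = i (a₂ * s₁ * t) := (im _ _).symm
      obtain ⟨N, hN⟩ := (hiInj _ _).1 hbt
      refine ⟨N, fun n hn => ?_⟩
      have hfn : f ((a₁ * s₂ * t) ^ n) = f ((a₂ * s₁ * t) ^ n) := by rw [hN n hn]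
      have e1 : f (a₁ * s₂ * t) = a' * f (s₁ * s₂ * t) := by
        rw [fm, fm, fm, fm, ← he₁, mul_assoc, mul_assoc, mul_assoc]
      have e2 : f (a₂ * s₁ * t) = a'' * f (s₁ * s₂ * t) := by
        rw [fm, fm, fm, fm, ← he₂, mul_assoc, mul_assoc, mul_assoc,
          mul_left_comm (f s₂) (f s₁)]
      obtain ⟨d, hd⟩ := (hfU (s₁ * s₂ * t) (hS.2 _ _ (hS.2 _ _ hs₁ hs₂) htS)).exists_right_inv
      have hfn' : a' ^ n * f (s₁ * s₂ * t) ^ n = a'' ^ n * f (s₁ * s₂ * t) ^ n := by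
        rw [aux_hom_pow hfH, aux_hom_pow hfH, e1, e2, mul_pow, mul_pow] at hfn
        exact hfn
      exact aux_unit_cancel (u := f (s₁ * s₂ * t) ^ n) (v := d ^ n)
        (by rw [← mul_pow, hd, one_pow]) hfn'
    · rintro ⟨N, hN⟩
      exact hred _ _ ⟨N, fun n hn => by
        rw [← aux_hom_pow hh, hN n hn, aux_hom_pow hh]⟩
  · -- Step D: power criterion
    intro b'
    obtain ⟨b, σ, ⟨s, hsS, rfl⟩, hb⟩ := hgS b'
    obtain ⟨N, hN⟩ := hiPow b
    obtain ⟨v, hv⟩ := (hfU s hsS).exists_right_inv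
    refine ⟨N, fun n hn => ?_⟩
    obtain ⟨a, ha⟩ := hN n hn
    refine ⟨f a * v ^ n, ?_⟩
    have h1 : h v * g (i s) = 1 := by
      rw [← hcomm, ← hm, mul_comm v (f s), hv, hh.2.1]
    have h2 : b' ^ n * g (i s) ^ n = g (b ^ n) := by
      rw [aux_hom_pow hgH, ← mul_pow, hb]
    have h3 : g (i s) ^ n * h v ^ n = 1 := by rw [← mul_pow, mul_comm, h1, one_pow]
    calc b' ^ n = b' ^ n * (g (i s) ^ n * h v ^ n) := by rw [h3, mul_one]
      _ = (b' ^ n * g (i s) ^ n) * h v ^ n := by rw [mul_assoc]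
      _ = g (b ^ n) * h v ^ n := by rw [h2]
      _ = g (i a) * h v ^ n := by rw [ha]
      _ = h (f a) * h v ^ n := by rw [hcomm]
      _ = h (f a * v ^ n) := by rw [← aux_hom_pow hh, ← hm]

end ToricMonoid
end

section
/- Let A be a partially cancellative pointed monoid with seminormalization A → A_sn, and let I be an ideal of A. Setting J = √(I·A_sn), the induced map A/I → A_sn/J is the seminormalization of A/I. -/
universe u v

namespace ToricMonoid

lemma hom_pow'_s14 {A : Type u} {B : Type v} [CommMonoidWithZero A] [CommMonoidWithZero B]
    {f : A → B} (hf : IsMonoidHom f) (x : A) : ∀ n : ℕ, f (x ^ n) = f x ^ n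
  | 0 => by simpa using hf.2.1
  | n + 1 => by rw [pow_succ, hf.2.2, hom_pow'_s14 hf x n, pow_succ]

lemma ideal_pow_mem {A : Type u} [CommMonoidWithZero A] {I : Set A} (hI : IsIdeal I)
    {x : A} (hx : x ∈ I) : ∀ n : ℕ, 1 ≤ n → x ^ n ∈ I := by
  intro n hn
  induction n with
  | zero => omega
  | succ k ih =>
    rcases Nat.eq_or_lt_of_le hn with h1 | h2
    · simpa [← h1] using hx
    · rw [pow_succ, mul_comm]; exact hI.2 _ _ (ih (by omega))

/-- Let `A` be partially cancellative with seminormalization `i : A → A_sn`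
and let `I` be an ideal of `A`.  With `J = √(I·A_sn)`, the induced map `A/I → A_sn/J` is
the seminormalization of `A/I`. -/
theorem seminormalization_of_quotient {A B Q Q' : Type u}
    [CommMonoidWithZero A] [CommMonoidWithZero B]
    [CommMonoidWithZero Q] [CommMonoidWithZero Q']
    (hpc : IsPC A) (i : A → B) (hi : IsSeminormalization i)
    (I : Set A) (hI : IsIdeal I)
    (q : A → Q) (hq : IsQuotientMap I q)
    (q' : B → Q')
    (hq' : IsQuotientMap
      {b : B | ∃ n : ℕ, 1 ≤ n ∧ ∃ a ∈ I, ∃ c : B, b ^ n = c * i a} q')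
    (h : Q → Q') (hh : IsMonoidHom h) (hcomm : ∀ a : A, h (q a) = q' (i a)) :
    IsSeminormalization h := by
  classical
  obtain ⟨hihom, hiBsn, hiinj, hipow⟩ := hi
  obtain ⟨hqhom, hqsurj, hqzero, hqeq⟩ := hq
  obtain ⟨hq'hom, hq'surj, hq'zero, hq'eq⟩ := hq'
  set J : Set B := {b : B | ∃ n : ℕ, 1 ≤ n ∧ ∃ a ∈ I, ∃ c : B, b ^ n = c * i a} with hJdef
  -- J is a radical set
  have hJrad : ∀ (b : B) (k : ℕ), 1 ≤ k → b ^ k ∈ J → b ∈ J := by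
    rintro b k hk ⟨n, hn, a, ha, c, hbc⟩
    exact ⟨k * n, Nat.mul_pos hk hn, a, ha, c, by rw [pow_mul, hbc]⟩
  -- if some power of a lies in I then q a is eventually-zero
  have hQnil : ∀ a : A, (∃ m : ℕ, 1 ≤ m ∧ a ^ m ∈ I) → ∃ N : ℕ, ∀ n ≥ N, (q a) ^ n = 0 := by
    rintro a ⟨m, hm, ham⟩
    refine ⟨m, fun n hn => ?_⟩
    rw [← hom_pow'_s14 hqhom, hqzero]
    have he : a ^ n = a ^ (n - m) * a ^ m := by rw [← pow_add]; congr 1; omega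
    rw [he]; exact hI.2 _ _ ham
  -- membership in J for elements from A
  have hJ_of : ∀ a : A, (∃ m : ℕ, 1 ≤ m ∧ a ^ m ∈ I) → i a ∈ J := by
    rintro a ⟨m, hm, ham⟩
    exact ⟨m, hm, a ^ m, ham, 1, by rw [← hom_pow'_s14 hihom, one_mul]⟩
  have hJ_to : ∀ a : A, i a ∈ J → ∃ m : ℕ, 1 ≤ m ∧ a ^ m ∈ I := by
    rintro a ⟨n, hn, a0, ha0, c, hc⟩
    obtain ⟨M, hM⟩ := hipow c
    obtain ⟨d, hd⟩ := hM (max M 1) (le_max_left _ _)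
    have him : i (a ^ (n * max M 1)) = i (d * a0 ^ max M 1) := by
      rw [hom_pow'_s14 hihom, pow_mul, hc, mul_pow, hihom.2.2, hom_pow'_s14 hihom, ← hd]
    obtain ⟨K, hK⟩ := (hiinj _ _).mp him
    have hk1 : 1 ≤ max K 1 := le_max_right _ _
    refine ⟨n * max M 1 * max K 1, Nat.mul_pos (Nat.mul_pos hn (le_max_right M 1)) (le_max_right K 1), ?_⟩
    have he : a ^ (n * max M 1 * max K 1) = (d * a0 ^ max M 1) ^ max K 1 := by
      rw [pow_mul]; exact hK _ (le_max_left _ _)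
    rw [he]
    exact ideal_pow_mem hI (hI.2 d _ (ideal_pow_mem hI ha0 _ (le_max_right _ _))) _ hk1
  refine ⟨hh, ⟨?_, ?_⟩, ?_, ?_⟩
  · -- Q' is reduced
    rintro x y ⟨N, hN⟩
    obtain ⟨u, rfl⟩ := hq'surj x
    obtain ⟨v, rfl⟩ := hq'surj y
    have hdisj : ∀ n ≥ max N 1, u ^ n = v ^ n ∨ (u ^ n ∈ J ∧ v ^ n ∈ J) := by
      intro n hn
      have hpe := hN n (le_trans (le_max_left _ _) hn)
      rw [← hom_pow'_s14 hq'hom, ← hom_pow'_s14 hq'hom] at hpe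
      exact (hq'eq _ _).mp hpe
    by_cases hc : ∃ n, max N 1 ≤ n ∧ u ^ n ∈ J
    · obtain ⟨n, hn, hun⟩ := hc
      have hn1 : 1 ≤ n := le_trans (le_max_right _ _) hn
      have hvn : v ^ n ∈ J := by
        rcases hdisj n hn with he | ⟨_, hv⟩
        · rwa [← he]
        · exact hv
      rw [(hq'zero u).mpr (hJrad u n hn1 hun), (hq'zero v).mpr (hJrad v n hn1 hvn)]
    · push_neg at hc
      have huv : u = v := by
        apply hiBsn.1
        refine ⟨max N 1, fun n hn => ?_⟩
        rcases hdisj n hn with he | ⟨hu, _⟩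
        · exact he
        · exact absurd hu (hc n hn)
      rw [huv]
  · -- Q' is seminormal
    intro x y hxy
    obtain ⟨u, rfl⟩ := hq'surj x
    obtain ⟨v, rfl⟩ := hq'surj y
    have he : q' (u ^ 3) = q' (v ^ 2) := by
      rw [hom_pow'_s14 hq'hom, hom_pow'_s14 hq'hom]; exact hxy
    rcases (hq'eq _ _).mp he with heq | ⟨h3, h2⟩
    · obtain ⟨z, hz2, hz3⟩ := hiBsn.2 u v heq
      exact ⟨q' z, by rw [hz2, hom_pow'_s14 hq'hom], by rw [hz3, hom_pow'_s14 hq'hom]⟩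
    · refine ⟨0, ?_, ?_⟩
      · rw [(hq'zero u).mpr (hJrad u 3 (by norm_num) h3)]; simp
      · rw [(hq'zero v).mpr (hJrad v 2 (by norm_num) h2)]; simp
  · -- injectivity modulo powers
    intro x y
    obtain ⟨a, rfl⟩ := hqsurj x
    obtain ⟨a', rfl⟩ := hqsurj y
    rw [hcomm, hcomm]
    constructor
    · intro he
      rcases (hq'eq _ _).mp he with heq | ⟨hJa, hJa'⟩
      · obtain ⟨N, hN⟩ := (hiinj a a').mp heq
        exact ⟨N, fun n hn => by
          rw [← hom_pow'_s14 hqhom, ← hom_pow'_s14 hqhom, hN n hn]⟩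
      · obtain ⟨N1, h1⟩ := hQnil a (hJ_to a hJa)
        obtain ⟨N2, h2⟩ := hQnil a' (hJ_to a' hJa')
        exact ⟨max N1 N2, fun n hn =>
          by rw [h1 n (le_trans (le_max_left _ _) hn), h2 n (le_trans (le_max_right _ _) hn)]⟩
    · rintro ⟨N, hN⟩
      apply (hq'eq _ _).mpr
      by_cases hc : ∃ n, max N 1 ≤ n ∧ a ^ n ∈ I
      · obtain ⟨n, hn, han⟩ := hc
        have hn1 : 1 ≤ n := le_trans (le_max_right _ _) hn
        have hpow : q (a ^ n) = q (a' ^ n) := by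
          rw [hom_pow'_s14 hqhom, hom_pow'_s14 hqhom]
          exact hN n (le_trans (le_max_left _ _) hn)
        have ha'n : a' ^ n ∈ I := by
          apply (hqzero _).mp
          rw [← hpow, hqzero]; exact han
        exact Or.inr ⟨hJ_of a ⟨n, hn1, han⟩, hJ_of a' ⟨n, hn1, ha'n⟩⟩
      · push_neg at hc
        left
        apply (hiinj a a').mpr
        refine ⟨max N 1, fun n hn => ?_⟩
        have hpow : q (a ^ n) = q (a' ^ n) := by
          rw [hom_pow'_s14 hqhom, hom_pow'_s14 hqhom]
          exact hN n (le_trans (le_max_left _ _) hn)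
        rcases (hqeq _ _).mp hpow with heq | ⟨h1, _⟩
        · exact heq
        · exact absurd h1 (hc n hn)
  · -- eventual surjectivity
    intro b'
    obtain ⟨b, rfl⟩ := hq'surj b'
    obtain ⟨N, hN⟩ := hipow b
    refine ⟨N, fun n hn => ?_⟩
    obtain ⟨a, ha⟩ := hN n hn
    exact ⟨q a, by rw [← hom_pow'_s14 hq'hom, ha, ← hcomm]⟩

end ToricMonoid
end
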